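/- Let Ψ : (0,1] → ℝ be C¹, strictly decreasing (Ψ' < 0), with Ψ(y) → +∞ as y → 0⁺. Consider a solution (X, Φ) of X' = R cos Φ/√(1+R²), Φ' = −(N/√(1+R²))Ψ'(NX) with Φ strictly increasing, Φ(t) ∈ (π/2, 3π/2), and NX(s) ∈ (0,1] on the maximal interval. If t* > t satisfies Φ(t*) = 3π − Φ(t), then X(t*) = X(t), V₁(t*) = −V₁(t), and V₂(t*) = V₂(t), where V₁ = R cos Φ, V₂ = R sin Φ. -/

import Mathlib

/-!
Along the flow, `Ψ(N X) + R sin Φ` is a first integral: the `Φ'`-term of its derivative,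
`R cos Φ · (−N/√(1+R²)) Ψ'(N X)`, cancels the `X'`-term `Ψ'(N X) · N R cos Φ / √(1+R²)`.
As `sin (3π − Φ) = sin Φ`, conservation gives `Ψ(N X(t*)) = Ψ(N X(t))`, and `Ψ` is injective on
`(0,1]` because `Ψ' < 0` there. The velocity relations are the identities for `3π − Φ`.
-/

open Real Set Filter

theorem Real.sin_three_pi_sub (x : ℝ) : sin (3 * π - x) = sin x := by
  rw [show 3 * π - x = (π - x) + 2 * π by ring, sin_add_two_pi, sin_pi_sub]

theorem Real.cos_three_pi_sub (x : ℝ) : cos (3 * π - x) = -cos x := by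
  rw [show 3 * π - x = (π - x) + 2 * π by ring, cos_add_two_pi, cos_pi_sub]

theorem Convex.strictAntiOn_of_hasDerivAt_neg {D : Set ℝ} (hD : Convex ℝ D) {f f' : ℝ → ℝ}
    (hf : ∀ x ∈ D, HasDerivAt f (f' x) x) (hf' : ∀ x ∈ D, f' x < 0) : StrictAntiOn f D :=
  strictAntiOn_of_hasDerivWithinAt_neg hD
    (fun x hx ↦ (hf x hx).continuousAt.continuousWithinAt)
    (fun x hx ↦ (hf x (interior_subset hx)).hasDerivWithinAt)
    (fun x hx ↦ hf' x (interior_subset hx))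

theorem eq_of_hasDerivAt_zero {f : ℝ → ℝ} {a b : ℝ} (hab : a ≤ b)
    (hf : ∀ s ∈ Icc a b, HasDerivAt f 0 s) : f b = f a :=
  constant_of_has_deriv_right_zero (fun s hs ↦ (hf s hs).continuousAt.continuousWithinAt)
    (fun s hs ↦ (hf s (Ico_subset_Icc_self hs)).hasDerivWithinAt) b (right_mem_Icc.2 hab)

noncomputable def firstIntegral (Ψ X Φ : ℝ → ℝ) (N R s : ℝ) : ℝ :=
  Ψ (N * X s) + R * sin (Φ s)

theorem hasDerivAt_firstIntegral {Ψ Ψ' X Φ : ℝ → ℝ} {N R c s : ℝ}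
    (hΨ : HasDerivAt Ψ (Ψ' (N * X s)) (N * X s))
    (hX : HasDerivAt X (R * cos (Φ s) / c) s)
    (hΦ : HasDerivAt Φ (-(N / c) * Ψ' (N * X s)) s) :
    HasDerivAt (firstIntegral Ψ X Φ N R) 0 s := by
  have h := (hΨ.comp s (hX.const_mul N)).add (hΦ.sin.const_mul R)
  exact h.congr_deriv (by ring)

theorem stmt_7_general (Ψ Ψ' : ℝ → ℝ)
    (hΨ : ∀ y ∈ Set.Ioc (0:ℝ) 1, HasDerivAt Ψ (Ψ' y) y)
    (hΨ'neg : ∀ y ∈ Set.Ioc (0:ℝ) 1, Ψ' y < 0)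
    (R N : ℝ) (hN : 1 ≤ N)
    (t tstar : ℝ) (ht : t < tstar)
    (X Φ : ℝ → ℝ)
    (hdom : ∀ s ∈ Set.Icc t tstar, N * X s ∈ Set.Ioc (0:ℝ) 1)
    (hX : ∀ s ∈ Set.Icc t tstar,
      HasDerivAt X (R * Real.cos (Φ s) / Real.sqrt (1 + R ^ 2)) s)
    (hΦ : ∀ s ∈ Set.Icc t tstar,
      HasDerivAt Φ (-(N / Real.sqrt (1 + R ^ 2)) * Ψ' (N * X s)) s)
    (hΦtstar : Φ tstar = 3 * π - Φ t) :
    X tstar = X t ∧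
      R * Real.cos (Φ tstar) = -(R * Real.cos (Φ t)) ∧
      R * Real.sin (Φ tstar) = R * Real.sin (Φ t) := by
  have hsin : sin (Φ tstar) = sin (Φ t) := by rw [hΦtstar, sin_three_pi_sub]
  have hcos : cos (Φ tstar) = -cos (Φ t) := by rw [hΦtstar, cos_three_pi_sub]
  have hconserved : firstIntegral Ψ X Φ N R tstar = firstIntegral Ψ X Φ N R t :=
    eq_of_hasDerivAt_zero ht.le fun s hs ↦
      hasDerivAt_firstIntegral (hΨ _ (hdom s hs)) (hX s hs) (hΦ s hs)
  have hΨeq : Ψ (N * X tstar) = Ψ (N * X t) := by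
    simpa only [firstIntegral, hsin, add_left_inj] using hconserved
  have hNX : N * X tstar = N * X t :=
    ((convex_Ioc 0 1).strictAntiOn_of_hasDerivAt_neg hΨ hΨ'neg).injOn
      (hdom tstar (right_mem_Icc.2 ht.le)) (hdom t (left_mem_Icc.2 ht.le)) hΨeq
  exact ⟨mul_left_cancel₀ (by linarith) hNX, by rw [hcos, mul_neg], by rw [hsin]⟩

/-- Specular reflection of the model trajectory: if `Φ(t*) = 3π − Φ(t)`, then
`X(t*) = X(t)`, `V₁(t*) = −V₁(t)` and `V₂(t*) = V₂(t)`, where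
`V₁ = R cos Φ`, `V₂ = R sin Φ`. -/
theorem stmt_7 (Ψ Ψ' : ℝ → ℝ)
    (hΨ : ∀ y ∈ Set.Ioc (0:ℝ) 1, HasDerivAt Ψ (Ψ' y) y)
    (hΨ'neg : ∀ y ∈ Set.Ioc (0:ℝ) 1, Ψ' y < 0)
    (hΨinf : Tendsto Ψ (nhdsWithin 0 (Set.Ioi 0)) atTop)
    (R N : ℝ) (hR : 0 < R) (hN : 1 ≤ N)
    (t tstar : ℝ) (ht : t < tstar)
    (X Φ : ℝ → ℝ)
    (hdom : ∀ s ∈ Set.Icc t tstar, N * X s ∈ Set.Ioc (0:ℝ) 1)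
    (hX : ∀ s ∈ Set.Icc t tstar,
      HasDerivAt X (R * Real.cos (Φ s) / Real.sqrt (1 + R ^ 2)) s)
    (hΦ : ∀ s ∈ Set.Icc t tstar,
      HasDerivAt Φ (-(N / Real.sqrt (1 + R ^ 2)) * Ψ' (N * X s)) s)
    (hmono : StrictMonoOn Φ (Set.Icc t tstar))
    (hΦt : Φ t ∈ Set.Ioo (π / 2) (3 * π / 2))
    (hΦtstar : Φ tstar = 3 * π - Φ t) :
    X tstar = X t ∧
      R * Real.cos (Φ tstar) = -(R * Real.cos (Φ t)) ∧
      R * Real.sin (Φ tstar) = R * Real.sin (Φ t) :=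
  stmt_7_general Ψ Ψ' hΨ hΨ'neg R N hN t tstar ht X Φ hdom hX hΦ hΦtstar
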